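/- Let α>1, β>1, δ>0, A=(α-1)/(αβ-1), B=(β-1)/(αβ-1). If (x(t),y(t)) is a solution of the system dx/dt = x(1-x-αy), dy/dt = δy(1-y-βx) on [0,∞) with x(0)=x₀>0, y(0)=y₀>0 and (x(t),y(t))→(A,B) as t→∞, then y₀ = B·(x₀/A)^δ · exp( −δ·∫₀^∞ ((α−1)y(τ) − (β−1)x(τ)) dτ ), the improper integral being convergent. -/

import Mathlib

/-!
Along a solution `(log x)' = -P` and `(log y)' = -δ Q`, where `P = x + α y - 1` and
`Q = β x + y - 1`, so the integrand `(α - 1) y - (β - 1) x = P - Q` is the derivative of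
`log y / δ - log x`, and the identity is the fundamental theorem of calculus on `[0, ∞)`.
The real issue is absolute integrability; as `P` and `Q` are derivatives of functions with
limits at `∞`, it holds as soon as each of them has eventually constant sign. That comes from
the Dulac-type function `P Q exp ∫₀ᵗ (x + δ y)`, whose derivative is
`-exp(∫₀ᵗ (x + δ y)) (β x P² + α δ y Q²) ≤ 0`: eventually it is either of constant strict sign,
so that neither `P` nor `Q` vanishes, or identically zero, which forces `P = Q = 0`.
-/

open Filter MeasureTheory Real Set Topology

theorem IsPreconnected.forall_pos_or_forall_neg {X : Type*} [TopologicalSpace X] {s : Set X}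
    {f : X → ℝ} (hs : IsPreconnected s) (hf : ContinuousOn f s) (h0 : ∀ t ∈ s, f t ≠ 0) :
    (∀ t ∈ s, 0 < f t) ∨ ∀ t ∈ s, f t < 0 := by
  by_contra! h
  obtain ⟨⟨a, ha, hfa⟩, b, hb, hfb⟩ := h
  obtain ⟨c, hc, hfc⟩ := hs.intermediate_value ha hb hf ⟨hfa, hfb⟩
  exact h0 c hc hfc

def EventuallySigned (f : ℝ → ℝ) : Prop :=
  (∀ᶠ t in atTop, 0 ≤ f t) ∨ ∀ᶠ t in atTop, f t ≤ 0

theorem EventuallySigned.of_eventually_ne_zero {f : ℝ → ℝ} {a : ℝ} (hf : ContinuousOn f (Ici a))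
    (h0 : ∀ᶠ t in atTop, f t ≠ 0) : EventuallySigned f := by
  obtain ⟨T, hT⟩ := eventually_atTop.1 ((eventually_ge_atTop a).and h0)
  rcases isPreconnected_Ici.forall_pos_or_forall_neg
      (hf.mono (Ici_subset_Ici.2 (hT T le_rfl).1)) (fun t ht => (hT t ht).2) with h | h
  · exact Or.inl (eventually_atTop.2 ⟨T, fun t ht => (h t ht).le⟩)
  · exact Or.inr (eventually_atTop.2 ⟨T, fun t ht => (h t ht).le⟩)

theorem AntitoneOn.eventually_pos_or_neg_or_eq_zero {ι : Type*} [SemilatticeSup ι] [Nonempty ι]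
    {ψ : ι → ℝ} {a : ι} (h : AntitoneOn ψ (Ici a)) :
    (∀ᶠ t in atTop, 0 < ψ t) ∨ (∀ᶠ t in atTop, ψ t < 0) ∨ ∀ᶠ t in atTop, ψ t = 0 := by
  by_cases hneg : ∃ T ∈ Ici a, ψ T < 0
  · obtain ⟨T, hT, hψT⟩ := hneg
    exact Or.inr <| Or.inl <| eventually_atTop.2
      ⟨T, fun t ht => (h hT (le_trans hT ht) ht).trans_lt hψT⟩
  push Not at hneg
  by_cases hzero : ∃ T ∈ Ici a, ψ T = 0
  · obtain ⟨T, hT, hψT⟩ := hzero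
    refine Or.inr <| Or.inr <| eventually_atTop.2 ⟨T, fun t ht => ?_⟩
    exact le_antisymm (hψT ▸ h hT (le_trans hT ht) ht) (hneg t (le_trans hT ht))
  · push Not at hzero
    exact Or.inl <| eventually_atTop.2
      ⟨a, fun t ht => (hneg t ht).lt_of_ne (hzero t ht).symm⟩

theorem integrableOn_Ioi_deriv_of_eventuallySigned {f f' : ℝ → ℝ} {a l : ℝ}
    (hf' : ContinuousOn f' (Ici a)) (hderiv : ∀ t ∈ Ioi a, HasDerivAt f (f' t) t)
    (hf : Tendsto f atTop (𝓝 l)) (hsign : EventuallySigned f') :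
    IntegrableOn f' (Ioi a) := by
  obtain ⟨T, haT, hsignT⟩ : ∃ T, a < T ∧
      ((∀ t ∈ Ioi T, 0 ≤ f' t) ∨ ∀ t ∈ Ioi T, f' t ≤ 0) := by
    refine ((eventually_gt_atTop a).and ?_).exists
    rcases hsign with h | h
    · exact (eventually_forall_ge_atTop.2 h).mono fun T hT => Or.inl fun t ht => hT t ht.le
    · exact (eventually_forall_ge_atTop.2 h).mono fun T hT => Or.inr fun t ht => hT t ht.le
  have hcont : ContinuousWithinAt f (Ici T) T := (hderiv T haT).continuousAt.continuousWithinAt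
  have hderivT : ∀ t ∈ Ioi T, HasDerivAt f (f' t) t := fun t ht => hderiv t (haT.trans ht)
  have htail : IntegrableOn f' (Ioi T) := hsignT.elim
    (integrableOn_Ioi_deriv_of_nonneg hcont hderivT · hf)
    (integrableOn_Ioi_deriv_of_nonpos hcont hderivT · hf)
  have hhead : IntegrableOn f' (Ioc a T) :=
    (hf'.mono Icc_subset_Ici_self).integrableOn_Icc.mono_set Ioc_subset_Icc_self
  rw [← Ioc_union_Ioi_eq_Ioi haT.le]
  exact hhead.union htail

theorem hasDerivWithinAt_integral_Ici {f : ℝ → ℝ} {a t : ℝ} (hf : ContinuousOn f (Ici a))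
    (ht : t ∈ Ici a) : HasDerivWithinAt (fun u => ∫ s in a..u, f s) (f t) (Ici a) t := by
  have hint : IntervalIntegrable f volume a t :=
    (hf.mono (by rw [uIcc_of_le (mem_Ici.1 ht)]; exact Icc_subset_Ici_self)).intervalIntegrable
  have hmeas : AEStronglyMeasurable f (volume.restrict (Ici a)) :=
    hf.aestronglyMeasurable measurableSet_Ici
  rcases (mem_Ici.1 ht).eq_or_lt with rfl | hat
  · exact intervalIntegral.integral_hasDerivWithinAt_right hint
      ⟨Ici a, mem_of_superset self_mem_nhdsWithin Ioi_subset_Ici_self, hmeas⟩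
      ((hf a ht).mono Ioi_subset_Ici_self)
  · have hmem : Ici a ∈ 𝓝 t := Ici_mem_nhds hat
    exact (intervalIntegral.integral_hasDerivAt_right hint ⟨Ici a, hmem, hmeas⟩
      ((hf t ht).continuousAt hmem)).hasDerivWithinAt

theorem eq_mul_exp_integral_of_hasDerivWithinAt {z c : ℝ → ℝ} {a t : ℝ}
    (hc : ContinuousOn c (Ici a)) (hz : ∀ s ∈ Ici a, HasDerivWithinAt z (c s * z s) (Ici a) s)
    (ht : t ∈ Ici a) : z t = z a * exp (∫ s in a..t, c s) := by
  set C := fun u => ∫ s in a..u, c s with hC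
  have hCderiv : ∀ s ∈ Ici a, HasDerivWithinAt C (c s) (Ici a) s :=
    fun s hs => hasDerivWithinAt_integral_Ici hc hs
  have hconst : ∀ u ∈ Icc a t, z u * exp (-C u) = z a * exp (-C a) := by
    refine constant_of_has_deriv_right_zero (fun s hs => ?_) fun s hs => ?_
    · exact ((hz s hs.1).mul (hCderiv s hs.1).neg.exp).continuousWithinAt.mono Icc_subset_Ici_self
    · exact (((hz s hs.1).mul (hCderiv s hs.1).neg.exp).mono (Ici_subset_Ici.2 hs.1)).congr_deriv
        (by ring)
  calc z t = z t * exp (-C t) * exp (C t) := by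
        rw [mul_assoc, ← exp_add, neg_add_cancel, exp_zero, mul_one]
    _ = z a * exp (C t) := by rw [hconst t ⟨ht, le_rfl⟩]; simp [hC]

namespace LotkaVolterra

structure IsSolution (α β δ : ℝ) (x y : ℝ → ℝ) : Prop where
  hasDerivWithinAt_x : ∀ t ∈ Ici (0 : ℝ),
    HasDerivWithinAt x (x t * (1 - x t - α * y t)) (Ici 0) t
  hasDerivWithinAt_y : ∀ t ∈ Ici (0 : ℝ),
    HasDerivWithinAt y (δ * y t * (1 - y t - β * x t)) (Ici 0) t

noncomputable def dulac (α β δ : ℝ) (x y : ℝ → ℝ) (t : ℝ) : ℝ :=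
  (x t + α * y t - 1) * (β * x t + y t - 1) * exp (∫ s in (0 : ℝ)..t, (x s + δ * y s))

variable {α β δ : ℝ} {x y : ℝ → ℝ}

namespace IsSolution

theorem continuousOn_x (h : IsSolution α β δ x y) : ContinuousOn x (Ici 0) :=
  fun t ht => (h.hasDerivWithinAt_x t ht).continuousWithinAt

theorem continuousOn_y (h : IsSolution α β δ x y) : ContinuousOn y (Ici 0) :=
  fun t ht => (h.hasDerivWithinAt_y t ht).continuousWithinAt

theorem x_pos (h : IsSolution α β δ x y) (hx₀ : 0 < x 0) {t : ℝ} (ht : t ∈ Ici 0) :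
    0 < x t := by
  have hc : ContinuousOn (fun t => 1 - x t - α * y t) (Ici 0) := by
    have := h.continuousOn_x; have := h.continuousOn_y; fun_prop
  rw [eq_mul_exp_integral_of_hasDerivWithinAt hc
    (fun s hs => (h.hasDerivWithinAt_x s hs).congr_deriv (mul_comm _ _)) ht]
  positivity

theorem y_pos (h : IsSolution α β δ x y) (hy₀ : 0 < y 0) {t : ℝ} (ht : t ∈ Ici 0) :
    0 < y t := by
  have hc : ContinuousOn (fun t => δ * (1 - y t - β * x t)) (Ici 0) := by
    have := h.continuousOn_x; have := h.continuousOn_y; fun_prop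
  rw [eq_mul_exp_integral_of_hasDerivWithinAt hc
    (fun s hs => (h.hasDerivWithinAt_y s hs).congr_deriv (by ring)) ht]
  positivity

theorem hasDerivAt_log_x (h : IsSolution α β δ x y) (hx₀ : 0 < x 0) {t : ℝ} (ht : 0 < t) :
    HasDerivAt (fun t => log (x t)) (1 - x t - α * y t) t := by
  have hxt := h.x_pos hx₀ ht.le
  exact (((h.hasDerivWithinAt_x t ht.le).hasDerivAt (Ici_mem_nhds ht)).log hxt.ne').congr_deriv
    (by field_simp)

theorem hasDerivAt_log_y (h : IsSolution α β δ x y) (hy₀ : 0 < y 0) {t : ℝ} (ht : 0 < t) :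
    HasDerivAt (fun t => log (y t)) (δ * (1 - y t - β * x t)) t := by
  have hyt := h.y_pos hy₀ ht.le
  exact (((h.hasDerivWithinAt_y t ht.le).hasDerivAt (Ici_mem_nhds ht)).log hyt.ne').congr_deriv
    (by field_simp)

theorem hasDerivWithinAt_dulac (h : IsSolution α β δ x y) {t : ℝ} (ht : t ∈ Ici 0) :
    HasDerivWithinAt (dulac α β δ x y)
      (-exp (∫ s in (0 : ℝ)..t, (x s + δ * y s)) *
        (β * x t * (x t + α * y t - 1) ^ 2 + α * δ * y t * (β * x t + y t - 1) ^ 2)) (Ici 0) t := by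
  have hx := h.hasDerivWithinAt_x t ht
  have hy := h.hasDerivWithinAt_y t ht
  have hP : HasDerivWithinAt (fun t => x t + α * y t - 1)
      (x t * (1 - x t - α * y t) + α * (δ * y t * (1 - y t - β * x t))) (Ici 0) t :=
    (hx.add (hy.const_mul α)).sub_const 1
  have hQ : HasDerivWithinAt (fun t => β * x t + y t - 1)
      (β * (x t * (1 - x t - α * y t)) + δ * y t * (1 - y t - β * x t)) (Ici 0) t :=
    ((hx.const_mul β).add hy).sub_const 1
  have hE : HasDerivWithinAt (fun t => exp (∫ s in (0 : ℝ)..t, (x s + δ * y s)))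
      (exp (∫ s in (0 : ℝ)..t, (x s + δ * y s)) * (x t + δ * y t)) (Ici 0) t :=
    (hasDerivWithinAt_integral_Ici (f := fun s => x s + δ * y s)
      (h.continuousOn_x.add (h.continuousOn_y.const_smul δ)) ht).exp
  exact ((hP.mul hQ).mul hE).congr_deriv (by simp only [Pi.mul_apply]; ring)

theorem antitoneOn_dulac (h : IsSolution α β δ x y) (hα : 0 ≤ α) (hβ : 0 ≤ β) (hδ : 0 ≤ δ)
    (hx₀ : 0 < x 0) (hy₀ : 0 < y 0) : AntitoneOn (dulac α β δ x y) (Ici 0) := by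
  refine antitoneOn_of_hasDerivWithinAt_nonpos (convex_Ici 0)
    (fun t ht => (h.hasDerivWithinAt_dulac ht).continuousWithinAt)
    (fun t ht => (h.hasDerivWithinAt_dulac (interior_subset ht)).mono interior_subset) ?_
  intro t ht
  have hxt := h.x_pos hx₀ (interior_subset ht)
  have hyt := h.y_pos hy₀ (interior_subset ht)
  have : 0 ≤ β * x t * (x t + α * y t - 1) ^ 2 + α * δ * y t * (β * x t + y t - 1) ^ 2 := by
    positivity
  nlinarith [exp_pos (∫ s in (0 : ℝ)..t, (x s + δ * y s))]

theorem nullclines_eq_zero_of_dulac_eventuallyEq_zero (h : IsSolution α β δ x y) (hα : 0 < α)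
    (hβ : 0 < β) (hδ : 0 < δ) (hx₀ : 0 < x 0) (hy₀ : 0 < y 0) {t : ℝ} (ht : 0 < t)
    (hψ : dulac α β δ x y =ᶠ[𝓝 t] fun _ => 0) :
    x t + α * y t - 1 = 0 ∧ β * x t + y t - 1 = 0 := by
  have hderiv := ((h.hasDerivWithinAt_dulac ht.le).hasDerivAt (Ici_mem_nhds ht)).unique
    ((hasDerivAt_const t (0 : ℝ)).congr_of_eventuallyEq hψ)
  have hxt := h.x_pos hx₀ ht.le
  have hyt := h.y_pos hy₀ ht.le
  have hsum : β * x t * (x t + α * y t - 1) ^ 2 + α * δ * y t * (β * x t + y t - 1) ^ 2 = 0 := by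
    simpa [(exp_pos _).ne'] using hderiv
  have hP : 0 ≤ β * x t * (x t + α * y t - 1) ^ 2 := by positivity
  have hQ : 0 ≤ α * δ * y t * (β * x t + y t - 1) ^ 2 := by positivity
  constructor
  · simpa [hβ.ne', hxt.ne'] using (show β * x t * (x t + α * y t - 1) ^ 2 = 0 by linarith)
  · simpa [hα.ne', hδ.ne', hyt.ne'] using
      (show α * δ * y t * (β * x t + y t - 1) ^ 2 = 0 by linarith)

theorem eventuallySigned_nullclines (h : IsSolution α β δ x y) (hα : 0 < α) (hβ : 0 < β)
    (hδ : 0 < δ) (hx₀ : 0 < x 0) (hy₀ : 0 < y 0) :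
    EventuallySigned (fun t => x t + α * y t - 1) ∧
      EventuallySigned (fun t => β * x t + y t - 1) := by
  have hP : ContinuousOn (fun t => x t + α * y t - 1) (Ici 0) := by
    have := h.continuousOn_x; have := h.continuousOn_y; fun_prop
  have hQ : ContinuousOn (fun t => β * x t + y t - 1) (Ici 0) := by
    have := h.continuousOn_x; have := h.continuousOn_y; fun_prop
  have of_ne_zero (hψ : ∀ᶠ t in atTop, dulac α β δ x y t ≠ 0) :
      EventuallySigned (fun t => x t + α * y t - 1) ∧
        EventuallySigned (fun t => β * x t + y t - 1) :=
    ⟨.of_eventually_ne_zero hP (hψ.mono fun _ ht => left_ne_zero_of_mul (left_ne_zero_of_mul ht)),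
      .of_eventually_ne_zero hQ (hψ.mono fun _ ht => right_ne_zero_of_mul (left_ne_zero_of_mul ht))⟩
  rcases (h.antitoneOn_dulac hα.le hβ.le hδ.le hx₀ hy₀).eventually_pos_or_neg_or_eq_zero
    with hψ | hψ | hψ
  · exact of_ne_zero (hψ.mono fun _ ht => ht.ne')
  · exact of_ne_zero (hψ.mono fun _ ht => ht.ne)
  · have hloc : ∀ᶠ t in atTop, dulac α β δ x y =ᶠ[𝓝 t] fun _ => 0 := by
      obtain ⟨T, hT⟩ := eventually_atTop.1 hψ
      filter_upwards [eventually_gt_atTop T] with t ht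
      exact eventually_of_mem (Ioi_mem_nhds ht) fun s hs => hT s hs.out.le
    have hzero : ∀ᶠ t in atTop, x t + α * y t - 1 = 0 ∧ β * x t + y t - 1 = 0 := by
      filter_upwards [hloc, eventually_gt_atTop 0] with t hψt ht
      exact h.nullclines_eq_zero_of_dulac_eventuallyEq_zero hα hβ hδ hx₀ hy₀ ht hψt
    exact ⟨.inl (hzero.mono fun _ ht => ht.1.ge), .inl (hzero.mono fun _ ht => ht.2.ge)⟩

theorem integrableOn_Ioi_of_tendsto (h : IsSolution α β δ x y) (hα : 0 < α) (hβ : 0 < β) (hδ : 0 < δ)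
    (hx₀ : 0 < x 0) (hy₀ : 0 < y 0) {A B : ℝ} (hA : A ≠ 0) (hB : B ≠ 0)
    (hxA : Tendsto x atTop (𝓝 A)) (hyB : Tendsto y atTop (𝓝 B)) :
    IntegrableOn (fun t => (α - 1) * y t - (β - 1) * x t) (Ioi 0) := by
  obtain ⟨hsP, hsQ⟩ := h.eventuallySigned_nullclines hα hβ hδ hx₀ hy₀
  have hP : IntegrableOn (fun t => x t + α * y t - 1) (Ioi 0) := by
    refine integrableOn_Ioi_deriv_of_eventuallySigned (f := fun t => -log (x t)) ?_
      (fun t ht => (h.hasDerivAt_log_x hx₀ ht).neg.congr_deriv (by ring))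
      ((continuousAt_log hA).tendsto.comp hxA).neg hsP
    have := h.continuousOn_x; have := h.continuousOn_y; fun_prop
  have hQ : IntegrableOn (fun t => β * x t + y t - 1) (Ioi 0) := by
    refine integrableOn_Ioi_deriv_of_eventuallySigned (f := fun t => -log (y t) / δ) ?_
      (fun t ht => ((h.hasDerivAt_log_y hy₀ ht).neg.div_const δ).congr_deriv
        (by field_simp; ring))
      (((continuousAt_log hB).tendsto.comp hyB).neg.div_const δ) hsQ
    have := h.continuousOn_x; have := h.continuousOn_y; fun_prop
  exact (hP.sub hQ).congr_fun (fun t _ => by simp only [Pi.sub_apply]; ring) measurableSet_Ioi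

end IsSolution

end LotkaVolterra

/-- Integral equation for the separatrix: if the forward solution from
`(x₀,y₀)` (positive initial conditions) converges to the saddle `(A,B)`,
then `y₀ = B (x₀/A)^δ exp(-δ ∫₀^∞ ((α-1) y - (β-1) x))`, the improper
integral being convergent. -/
theorem stmt_13 (α β δ : ℝ) (hα : 1 < α) (hβ : 1 < β) (hδ : 0 < δ)
    (A B : ℝ) (hA : A = (α - 1) / (α * β - 1)) (hB : B = (β - 1) / (α * β - 1))
    (x₀ y₀ : ℝ) (hx₀ : 0 < x₀) (hy₀ : 0 < y₀)
    (x y : ℝ → ℝ)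
    (hx : ∀ t ∈ Set.Ici (0 : ℝ),
      HasDerivWithinAt x (x t * (1 - x t - α * y t)) (Set.Ici 0) t)
    (hy : ∀ t ∈ Set.Ici (0 : ℝ),
      HasDerivWithinAt y (δ * y t * (1 - y t - β * x t)) (Set.Ici 0) t)
    (hx0 : x 0 = x₀) (hy0 : y 0 = y₀)
    (hconv : Tendsto (fun t => (x t, y t)) atTop (nhds (A, B))) :
    IntegrableOn (fun τ => (α - 1) * y τ - (β - 1) * x τ) (Set.Ici 0) ∧
    y₀ = B * (x₀ / A) ^ δ *
      Real.exp (-δ * ∫ τ in Set.Ici (0 : ℝ), ((α - 1) * y τ - (β - 1) * x τ)) := by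
  have hαβ : 0 < α * β - 1 := by nlinarith
  have hA₀ : 0 < A := hA ▸ div_pos (by linarith) hαβ
  have hB₀ : 0 < B := hB ▸ div_pos (by linarith) hαβ
  have h : LotkaVolterra.IsSolution α β δ x y := ⟨hx, hy⟩
  subst hx0 hy0
  have hxA : Tendsto x atTop (𝓝 A) := (continuous_fst.tendsto (A, B)).comp hconv
  have hyB : Tendsto y atTop (𝓝 B) := (continuous_snd.tendsto (A, B)).comp hconv
  have hint := h.integrableOn_Ioi_of_tendsto (by linarith) (by linarith) hδ hx₀ hy₀ hA₀.ne' hB₀.ne' hxA hyB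
  have hval : ∫ τ in Ioi 0, ((α - 1) * y τ - (β - 1) * x τ) =
      (log B / δ - log A) - (log (y 0) / δ - log (x 0)) := by
    refine integral_Ioi_of_hasDerivAt_of_tendsto (f := fun t => log (y t) / δ - log (x t))
      ?_ (fun t ht => ((h.hasDerivAt_log_y hy₀ ht).div_const δ).sub (h.hasDerivAt_log_x hx₀ ht)
        |>.congr_deriv (by field_simp; ring)) hint
      ((((continuousAt_log hB₀.ne').tendsto.comp hyB).div_const δ).sub
        ((continuousAt_log hA₀.ne').tendsto.comp hxA))
    exact ((h.continuousOn_y 0 self_mem_Ici).log hy₀.ne' |>.div_const δ).sub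
      ((h.continuousOn_x 0 self_mem_Ici).log hx₀.ne')
  refine ⟨(integrableOn_Ici_iff_integrableOn_Ioi).2 hint, ?_⟩
  have hexp : log (x 0 / A) * δ + -δ * (log B / δ - log A - (log (y 0) / δ - log (x 0))) =
      log (y 0) - log B := by
    rw [log_div hx₀.ne' hA₀.ne']; field_simp; ring
  rw [integral_Ici_eq_integral_Ioi, hval, rpow_def_of_pos (div_pos hx₀ hA₀), mul_assoc,
    ← exp_add, hexp, exp_sub, exp_log hy₀, exp_log hB₀]
  field_simp
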